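/- arXiv:nlin/0210016 — 2 statements merged into one kernel-verified Lean document; each statement's English description precedes it below -/
import Mathlib

section
/- Let n ≥ 1 and let Φ : ℝⁿ → ℝⁿ be a C² diffeomorphism preserving Lebesgue measure. Let M, M₂ ≥ 0 satisfy ‖DΦ(z)‖ ≤ M and ‖D²Φ(z)‖ ≤ M₂ for all z ∈ ℝⁿ (norms of the first and second total derivatives as linear resp. bilinear maps). Then for every twice continuously differentiable compactly supported u : ℝⁿ → ℝ, ‖D²(u∘Φ)‖_{L²(ℝⁿ)} ≤ 2 ( M₂ ‖∇u‖_{L²(ℝⁿ)} + M² ‖D²u‖_{L²(ℝⁿ)} ); equivalently ‖u∘Φ‖_{Ḣ²} ≤ 2( M₂ ‖u‖_{Ḣ¹} + M² ‖u‖_{Ḣ²} ). -/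
open MeasureTheory

/-!
By the second-order chain rule,
`D²(u ∘ Φ) z (h, k) = Du(Φ z) (D²Φ z (h, k)) + D²u(Φ z) (DΦ z h, DΦ z k)`, so
`‖D²(u ∘ Φ) z‖ ≤ M₂ ‖Du(Φ z)‖ + M² ‖D²u(Φ z)‖` pointwise. Squaring with
`(a + b)² ≤ 2a² + 2b²` and integrating, the change of variables along the
measure-preserving `Φ` turns the right-hand side into `2M₂² ‖u‖²_{Ḣ¹} + 2M⁴ ‖u‖²_{Ḣ²}`.
-/

section SecondDerivative

variable {E F G : Type*} [NormedAddCommGroup E] [NormedSpace ℝ E]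
  [NormedAddCommGroup F] [NormedSpace ℝ F] [NormedAddCommGroup G] [NormedSpace ℝ G]

theorem norm_fderiv_fderiv_apply_le (f : E → F) (x h k : E) :
    ‖fderiv ℝ (fderiv ℝ f) x h k‖ ≤ ‖iteratedFDeriv ℝ 2 f x‖ * ‖h‖ * ‖k‖ := by
  rw [← norm_iteratedFDeriv_fderiv (n := 1), norm_iteratedFDeriv_one]
  exact (fderiv ℝ (fderiv ℝ f) x).le_opNorm₂ h k

theorem fderiv_fderiv_comp_apply {g : F → G} {f : E → F} (hg : ContDiff ℝ 2 g)
    (hf : ContDiff ℝ 2 f) (x h k : E) :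
    fderiv ℝ (fderiv ℝ (g ∘ f)) x h k =
      fderiv ℝ g (f x) (fderiv ℝ (fderiv ℝ f) x h k) +
        fderiv ℝ (fderiv ℝ g) (f x) (fderiv ℝ f x h) (fderiv ℝ f x k) := by
  have hgd : Differentiable ℝ g := hg.differentiable two_ne_zero
  have hfd : Differentiable ℝ f := hf.differentiable two_ne_zero
  have hg' : Differentiable ℝ (fderiv ℝ g) :=
    (hg.fderiv_right one_add_one_eq_two.le).differentiable one_ne_zero
  have hf' : Differentiable ℝ (fderiv ℝ f) :=
    (hf.fderiv_right one_add_one_eq_two.le).differentiable one_ne_zero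
  have hchain : fderiv ℝ (g ∘ f) = fun y => (fderiv ℝ g (f y)).comp (fderiv ℝ f y) :=
    funext fun y => fderiv_comp y (hgd (f y)) (hfd y)
  have hg'f : DifferentiableAt ℝ (fun y => fderiv ℝ g (f y)) x := (hg' (f x)).comp x (hfd x)
  rw [hchain, fderiv_clm_comp hg'f (hf' x), fderiv_fun_comp x (hg' (f x)) (hfd x)]
  simp [add_comm]

theorem norm_iteratedFDeriv_two_comp_le {g : F → G} {f : E → F} (hg : ContDiff ℝ 2 g)
    (hf : ContDiff ℝ 2 f) {x : E} {M M₂ : ℝ} (hDf : ‖fderiv ℝ f x‖ ≤ M)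
    (hD2f : ‖iteratedFDeriv ℝ 2 f x‖ ≤ M₂) :
    ‖iteratedFDeriv ℝ 2 (g ∘ f) x‖ ≤
      M₂ * ‖fderiv ℝ g (f x)‖ + M ^ 2 * ‖iteratedFDeriv ℝ 2 g (f x)‖ := by
  have hM : 0 ≤ M := (norm_nonneg _).trans hDf
  have hM₂ : 0 ≤ M₂ := (norm_nonneg _).trans hD2f
  have hDf_apply (h : E) : ‖fderiv ℝ f x h‖ ≤ M * ‖h‖ :=
    (fderiv ℝ f x).le_of_opNorm_le hDf h
  refine ContinuousMultilinearMap.opNorm_le_bound (by positivity) fun m => ?_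
  rw [iteratedFDeriv_two_apply, fderiv_fderiv_comp_apply hg hf, Fin.prod_univ_two]
  have hfirst : ‖fderiv ℝ g (f x) (fderiv ℝ (fderiv ℝ f) x (m 0) (m 1))‖ ≤
      ‖fderiv ℝ g (f x)‖ * (M₂ * ‖m 0‖ * ‖m 1‖) := by
    refine (fderiv ℝ g (f x)).le_of_opNorm_le le_rfl _ |>.trans ?_
    gcongr
    exact (norm_fderiv_fderiv_apply_le f x _ _).trans (by gcongr)
  have hsecond : ‖fderiv ℝ (fderiv ℝ g) (f x) (fderiv ℝ f x (m 0)) (fderiv ℝ f x (m 1))‖ ≤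
      ‖iteratedFDeriv ℝ 2 g (f x)‖ * (M * ‖m 0‖) * (M * ‖m 1‖) :=
    (norm_fderiv_fderiv_apply_le g (f x) _ _).trans (by gcongr <;> apply hDf_apply)
  calc _ ≤ _ := norm_add_le _ _
    _ ≤ _ := add_le_add hfirst hsecond
    _ = _ := by ring

end SecondDerivative

theorem Real.sqrt_two_mul_add_le {A B c d : ℝ} (hA : 0 ≤ A) (hB : 0 ≤ B) (hc : 0 ≤ c)
    (hd : 0 ≤ d) :
    √(2 * c ^ 2 * A + 2 * d ^ 2 * B) ≤ 2 * (c * √A + d * √B) := by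
  rw [Real.sqrt_le_left (by positivity)]
  nlinarith [Real.sq_sqrt hA, Real.sq_sqrt hB, Real.sqrt_nonneg A, Real.sqrt_nonneg B,
    mul_nonneg (mul_nonneg hc (Real.sqrt_nonneg A)) (mul_nonneg hd (Real.sqrt_nonneg B))]

theorem sqrt_integral_norm_sq_le_of_le_comp {α β E F G : Type*} [MeasurableSpace α]
    [MeasurableSpace β] [NormedAddCommGroup E] [NormedAddCommGroup F] [NormedAddCommGroup G]
    {μ : Measure α} {ν : Measure β} {Φ : α → β} (hΦ : MeasurePreserving Φ μ ν)
    (hΦe : MeasurableEmbedding Φ) {v : α → E} {f : β → F} {g : β → G} {c d : ℝ}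
    (hc : 0 ≤ c) (hd : 0 ≤ d) (hf : Integrable (fun x => ‖f x‖ ^ 2) ν)
    (hg : Integrable (fun x => ‖g x‖ ^ 2) ν)
    (hv : ∀ z, ‖v z‖ ≤ c * ‖f (Φ z)‖ + d * ‖g (Φ z)‖) :
    √(∫ z, ‖v z‖ ^ 2 ∂μ) ≤ 2 * (c * √(∫ x, ‖f x‖ ^ 2 ∂ν) + d * √(∫ x, ‖g x‖ ^ 2 ∂ν)) := by
  set w : β → ℝ := fun x => 2 * c ^ 2 * ‖f x‖ ^ 2 + 2 * d ^ 2 * ‖g x‖ ^ 2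
  have hw : Integrable w ν := (hf.const_mul _).add (hg.const_mul _)
  have hvw (z : α) : ‖v z‖ ^ 2 ≤ w (Φ z) := by
    have := hv z
    nlinarith [norm_nonneg (v z), sq_nonneg (c * ‖f (Φ z)‖ - d * ‖g (Φ z)‖)]
  have hint : ∫ z, ‖v z‖ ^ 2 ∂μ ≤ ∫ x, w x ∂ν := by
    rw [← hΦ.integral_comp hΦe]
    exact integral_mono_of_nonneg (.of_forall fun z => by positivity)
      ((hΦ.integrable_comp_emb hΦe).2 hw) (.of_forall hvw)
  rw [integral_add (hf.const_mul _) (hg.const_mul _), integral_const_mul,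
    integral_const_mul] at hint
  exact (Real.sqrt_le_sqrt hint).trans <| Real.sqrt_two_mul_add_le
    (integral_nonneg fun _ => by positivity) (integral_nonneg fun _ => by positivity) hc hd

theorem Continuous.integrable_norm_sq_of_hasCompactSupport {X E : Type*} [TopologicalSpace X]
    [MeasurableSpace X] [OpensMeasurableSpace X] [NormedAddCommGroup E] {μ : Measure X}
    [IsFiniteMeasureOnCompacts μ] {f : X → E} (hf : Continuous f) (hs : HasCompactSupport f) :
    Integrable (fun x => ‖f x‖ ^ 2) μ :=
  (hf.memLp_of_hasCompactSupport hs (p := 2)).integrable_norm_pow two_ne_zero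

theorem liouville_transport_H2_estimate_general
    (n : ℕ)
    (Φ : EuclideanSpace ℝ (Fin n) ≃ EuclideanSpace ℝ (Fin n))
    (hΦ : ContDiff ℝ 2 ⇑Φ)
    (hmp : MeasurePreserving ⇑Φ volume volume)
    (M M₂ : ℝ) (hM₂ : 0 ≤ M₂)
    (hDΦ : ∀ z, ‖fderiv ℝ (⇑Φ) z‖ ≤ M)
    (hD2Φ : ∀ z, ‖iteratedFDeriv ℝ 2 (⇑Φ) z‖ ≤ M₂)
    (u : EuclideanSpace ℝ (Fin n) → ℝ)
    (hu : ContDiff ℝ 2 u) (husupp : HasCompactSupport u) :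
    Real.sqrt (∫ z, ‖iteratedFDeriv ℝ 2 (u ∘ ⇑Φ) z‖ ^ 2)
      ≤ 2 * (M₂ * Real.sqrt (∫ x, ‖fderiv ℝ u x‖ ^ 2)
          + M ^ 2 * Real.sqrt (∫ x, ‖iteratedFDeriv ℝ 2 u x‖ ^ 2)) :=
  sqrt_integral_norm_sq_le_of_le_comp hmp (hΦ.continuous.measurableEmbedding Φ.injective)
    hM₂ (sq_nonneg M)
    ((hu.continuous_fderiv two_ne_zero).integrable_norm_sq_of_hasCompactSupport
      (husupp.fderiv ℝ))
    ((hu.continuous_iteratedFDeriv le_rfl).integrable_norm_sq_of_hasCompactSupport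
      (husupp.iteratedFDeriv 2))
    fun z => norm_iteratedFDeriv_two_comp_le hu hΦ (hDΦ z) (hD2Φ z)

/-- Transport estimate in `Ḣ²`: if `Φ` is a measure-preserving `C²` diffeomorphism of `ℝⁿ`
with `‖DΦ‖ ≤ M` and `‖D²Φ‖ ≤ M₂`, then for every `C²` compactly supported `u`,
`‖u∘Φ‖_{Ḣ²} ≤ 2(M₂‖u‖_{Ḣ¹} + M²‖u‖_{Ḣ²})`. -/
theorem liouville_transport_H2_estimate
    (n : ℕ) (hn : 1 ≤ n)
    (Φ : EuclideanSpace ℝ (Fin n) ≃ EuclideanSpace ℝ (Fin n))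
    (hΦ : ContDiff ℝ 2 ⇑Φ) (hΦsymm : ContDiff ℝ 2 ⇑Φ.symm)
    (hmp : MeasurePreserving ⇑Φ volume volume)
    (M M₂ : ℝ) (hM : 0 ≤ M) (hM₂ : 0 ≤ M₂)
    (hDΦ : ∀ z, ‖fderiv ℝ (⇑Φ) z‖ ≤ M)
    (hD2Φ : ∀ z, ‖iteratedFDeriv ℝ 2 (⇑Φ) z‖ ≤ M₂)
    (u : EuclideanSpace ℝ (Fin n) → ℝ)
    (hu : ContDiff ℝ 2 u) (husupp : HasCompactSupport u) :
    Real.sqrt (∫ z, ‖iteratedFDeriv ℝ 2 (u ∘ ⇑Φ) z‖ ^ 2)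
      ≤ 2 * (M₂ * Real.sqrt (∫ x, ‖fderiv ℝ u x‖ ^ 2)
          + M ^ 2 * Real.sqrt (∫ x, ‖iteratedFDeriv ℝ 2 u x‖ ^ 2)) :=
  liouville_transport_H2_estimate_general n Φ hΦ hmp M M₂ hM₂ hDΦ hD2Φ u hu husupp
end

section
/- Let d ≥ 3, let e ∈ ℝ^d be a unit vector and H = { p ∈ ℝ^d : p·e = 0 } its orthogonal hyperplane equipped with its (d−1)-dimensional Lebesgue measure σ. Let g : ℝ^d → ℝ be continuous and nonnegative with g(0) > 0 and ∫_H (1 + |p|²) g(p) dσ(p) < ∞. Define the real symmetric d×d matrix D by D_{ml} = ∫_H p_m p_l g(p) dσ(p). Then the kernel of D equals the line ℝ·e; equivalently, D has rank d − 1. -/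
/-!
The quadratic form of `D` is `ξ ↦ ∫_H (p·ξ)² g(p) dσ(p)`, and `(D ξ)_m = ∫_H p_m (p·ξ) g(p) dσ(p)`
vanishes for `ξ = e ⊥ H`. Conversely, if `D ξ = 0` the quadratic form vanishes; its integrand is
continuous and nonnegative, hence identically zero, so the linear form `p ↦ p·ξ` vanishes on the
neighbourhood of `0` in `H` where `g > 0`, hence on all of `H`, and `ξ ∈ H^⊥ = ℝ e`. Rank–nullity
then gives the rank.
-/

open MeasureTheory Matrix
open scoped RealInnerProductSpace

theorem LinearMap.eq_zero_of_eventually_nhds_zero {𝕜 E F : Type*} [NontriviallyNormedField 𝕜]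
    [AddCommGroup E] [Module 𝕜 E] [TopologicalSpace E] [ContinuousSMul 𝕜 E]
    [AddCommGroup F] [Module 𝕜 F] {f : E →ₗ[𝕜] F} (hf : ∀ᶠ x in nhds 0, f x = 0) : f = 0 :=
  LinearMap.ker_eq_top.mp (absorbent_nhds_zero hf).submodule_eq_top

theorem LinearMap.finrank_range_of_ker_eq_span_singleton {K V W : Type*} [DivisionRing K]
    [AddCommGroup V] [Module K V] [FiniteDimensional K V] [AddCommGroup W] [Module K W]
    {f : V →ₗ[K] W} {x : V} (hx : x ≠ 0) (hker : LinearMap.ker f = K ∙ x) :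
    Module.finrank K (LinearMap.range f) = Module.finrank K V - 1 := by
  have := f.finrank_range_add_finrank_ker
  rw [hker, finrank_span_singleton hx] at this
  omega

theorem mem_span_singleton_iff_forall_inner_eq_zero {E : Type*} [NormedAddCommGroup E]
    [InnerProductSpace ℝ E] {e x : E} :
    x ∈ ℝ ∙ e ↔ ∀ p, ⟪p, e⟫ = 0 → ⟪p, x⟫ = 0 := by
  rw [← (ℝ ∙ e).orthogonal_orthogonal, Submodule.mem_orthogonal]
  simp only [Submodule.mem_orthogonal_singleton_iff_inner_left]

theorem Continuous.eq_zero_of_integral_eq_zero {X : Type*} [TopologicalSpace X]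
    [MeasurableSpace X] [OpensMeasurableSpace X] {μ : Measure X} [μ.IsOpenPosMeasure]
    {f : X → ℝ} (hf : Continuous f) (hf0 : 0 ≤ f) (hfi : Integrable f μ)
    (h : ∫ x, f x ∂μ = 0) : f = 0 :=
  (hf.ae_eq_iff_eq μ continuous_zero).mp ((integral_eq_zero_iff_of_nonneg hf0 hfi).mp h)

namespace EuclideanSpace

theorem abs_apply_mul_apply_le_norm_sq {ι : Type*} [Fintype ι] (p : EuclideanSpace ℝ ι)
    (m l : ι) : |p m * p l| ≤ ‖p‖ ^ 2 := by
  rw [abs_mul, sq]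
  exact mul_le_mul (PiLp.norm_apply_le p m) (PiLp.norm_apply_le p l) (abs_nonneg _)
    (norm_nonneg _)

theorem integrable_apply_mul_apply_mul {α ι : Type*} [Fintype ι] [MeasurableSpace α]
    {μ : Measure α} {v : α → EuclideanSpace ℝ ι} {w : α → ℝ} (hw0 : 0 ≤ w)
    (hint : Integrable (fun a => (1 + ‖v a‖ ^ 2) * w a) μ) {m l : ι}
    (hmeas : AEStronglyMeasurable (fun a => v a m * v a l * w a) μ) :
    Integrable (fun a => v a m * v a l * w a) μ :=
  hint.mono' hmeas <| .of_forall fun a => by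
    rw [norm_mul, Real.norm_eq_abs, Real.norm_of_nonneg (hw0 a)]
    exact mul_le_mul_of_nonneg_right ((abs_apply_mul_apply_le_norm_sq _ m l).trans
      (le_add_of_nonneg_left zero_le_one)) (hw0 a)

theorem forall_dotProduct_eq_zero_iff_mem_span {ι E : Type*} [Fintype ι]
    {φ : E → EuclideanSpace ℝ ι} {e : EuclideanSpace ℝ ι}
    (hφ : Set.range φ = {p | ⟪p, e⟫ = 0}) (ξ : ι → ℝ) :
    (∀ u, (φ u).ofLp ⬝ᵥ ξ = 0) ↔ ξ ∈ ℝ ∙ (EuclideanSpace.equiv ι ℝ e) := by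
  have hspan : ξ ∈ ℝ ∙ (EuclideanSpace.equiv ι ℝ e) ↔ WithLp.toLp 2 ξ ∈ ℝ ∙ e := by
    simp only [Submodule.mem_span_singleton, ← map_smul, ← ContinuousLinearEquiv.eq_symm_apply]
    rfl
  have hinner (p : EuclideanSpace ℝ ι) : ⟪p, WithLp.toLp 2 ξ⟫ = p.ofLp ⬝ᵥ ξ := by
    simp [inner_eq_star_dotProduct, dotProduct_comm]
  rw [hspan, mem_span_singleton_iff_forall_inner_eq_zero]
  refine (Set.forall_mem_range
    (p := fun p : EuclideanSpace ℝ ι => p.ofLp ⬝ᵥ ξ = 0)).symm.trans ?_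
  simp only [hφ, Set.mem_ofPred_eq, hinner]

end EuclideanSpace

section SecondMoment

variable {n : Type*} [Fintype n]

noncomputable def secondMomentMatrix {α : Type*} [MeasurableSpace α] (μ : Measure α)
    (v : α → n → ℝ) (w : α → ℝ) : Matrix n n ℝ :=
  Matrix.of fun m l => ∫ a, v a m * v a l * w a ∂μ

variable {α : Type*} [MeasurableSpace α] {μ : Measure α} {v : α → n → ℝ} {w : α → ℝ}

theorem integrable_apply_mul_dotProduct_mul
    (hint : ∀ m l, Integrable (fun a => v a m * v a l * w a) μ) (ξ : n → ℝ) (m : n) :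
    Integrable (fun a => v a m * (v a ⬝ᵥ ξ) * w a) μ := by
  refine (integrable_finsetSum Finset.univ fun l _ => (hint m l).mul_const (ξ l)).congr
    (.of_forall fun a => ?_)
  simp only [dotProduct, Finset.mul_sum, Finset.sum_mul]
  exact Finset.sum_congr rfl fun l _ => by ring

theorem integrable_dotProduct_sq_mul
    (hint : ∀ m l, Integrable (fun a => v a m * v a l * w a) μ) (ξ : n → ℝ) :
    Integrable (fun a => (v a ⬝ᵥ ξ) ^ 2 * w a) μ := by
  refine (integrable_finsetSum Finset.univ fun m _ =>
    (integrable_apply_mul_dotProduct_mul hint ξ m).mul_const (ξ m)).congr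
    (.of_forall fun a => ?_)
  dsimp only
  rw [sq, dotProduct, Finset.sum_mul, Finset.sum_mul]
  exact Finset.sum_congr rfl fun m _ => by ring

theorem secondMomentMatrix_mulVec
    (hint : ∀ m l, Integrable (fun a => v a m * v a l * w a) μ) (ξ : n → ℝ) (m : n) :
    (secondMomentMatrix μ v w *ᵥ ξ) m = ∫ a, v a m * (v a ⬝ᵥ ξ) * w a ∂μ := by
  simp only [mulVec, dotProduct, secondMomentMatrix, of_apply, Finset.mul_sum, Finset.sum_mul]
  rw [integral_finsetSum _ fun l _ => ?_]
  · exact Finset.sum_congr rfl fun l _ => by rw [← integral_mul_const]; congr 1; ext; ring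
  · exact ((hint m l).mul_const (ξ l)).congr (.of_forall fun a => by ring)

theorem dotProduct_secondMomentMatrix_mulVec
    (hint : ∀ m l, Integrable (fun a => v a m * v a l * w a) μ) (ξ : n → ℝ) :
    ξ ⬝ᵥ (secondMomentMatrix μ v w *ᵥ ξ) = ∫ a, (v a ⬝ᵥ ξ) ^ 2 * w a ∂μ := by
  rw [dotProduct]
  simp only [secondMomentMatrix_mulVec hint, ← integral_const_mul]
  rw [← integral_finsetSum _ fun m _ =>
    (integrable_apply_mul_dotProduct_mul hint ξ m).const_mul _]
  congr 1; ext a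
  rw [sq, dotProduct_comm, dotProduct, Finset.sum_mul, Finset.sum_mul]
  exact Finset.sum_congr rfl fun m _ => by ring

theorem secondMomentMatrix_mulVec_eq_zero_iff {E : Type*} [NormedAddCommGroup E]
    [NormedSpace ℝ E] [MeasurableSpace E] [OpensMeasurableSpace E] {μ : Measure E}
    [μ.IsOpenPosMeasure] (L : E →L[ℝ] n → ℝ) {w : E → ℝ} (hw : Continuous w) (hw0 : 0 ≤ w)
    (hw00 : 0 < w 0) (hint : ∀ m l, Integrable (fun u => L u m * L u l * w u) μ)
    (ξ : n → ℝ) :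
    secondMomentMatrix μ L w *ᵥ ξ = 0 ↔ ∀ u, L u ⬝ᵥ ξ = 0 := by
  refine ⟨fun hξ => ?_, fun h => funext fun m => by simp [secondMomentMatrix_mulVec hint, h]⟩
  have hsq : (fun u => (L u ⬝ᵥ ξ) ^ 2 * w u) = 0 := by
    refine Continuous.eq_zero_of_integral_eq_zero (μ := μ) (by fun_prop)
      (fun u => mul_nonneg (sq_nonneg _) (hw0 u)) (integrable_dotProduct_sq_mul hint ξ) ?_
    rw [← dotProduct_secondMomentMatrix_mulVec hint, hξ, dotProduct_zero]
  have hnear : ∀ᶠ u in nhds 0, L u ⬝ᵥ ξ = 0 := by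
    filter_upwards [hw.continuousAt.eventually (lt_mem_nhds hw00)] with u hu
    simpa [hu.ne'] using congrFun hsq u
  have hlin := LinearMap.eq_zero_of_eventually_nhds_zero
    (f := (dotProductBilin ℝ ℝ).flip ξ ∘ₗ L.toLinearMap) (by simpa using hnear)
  exact fun u => by simpa using LinearMap.congr_fun hlin u

end SecondMoment

theorem diffusion_matrix_rank_general
    (d : ℕ)
    (e : EuclideanSpace ℝ (Fin d)) (he : ‖e‖ = 1)
    (φ : EuclideanSpace ℝ (Fin (d - 1)) →ₗᵢ[ℝ] EuclideanSpace ℝ (Fin d))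
    (hφ : Set.range ⇑φ = {p : EuclideanSpace ℝ (Fin d) | ⟪p, e⟫ = 0})
    (g : EuclideanSpace ℝ (Fin d) → ℝ)
    (hg : Continuous g) (hg0 : ∀ p, 0 ≤ g p) (hgpos : 0 < g 0)
    (hint : Integrable
      (fun u : EuclideanSpace ℝ (Fin (d - 1)) => (1 + ‖φ u‖ ^ 2) * g (φ u)))
    (D : Matrix (Fin d) (Fin d) ℝ)
    (hD : ∀ m l, D m l = ∫ u : EuclideanSpace ℝ (Fin (d - 1)), φ u m * φ u l * g (φ u)) :
    LinearMap.ker D.mulVecLin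
        = Submodule.span ℝ {(EuclideanSpace.equiv (Fin d) ℝ) e} ∧
    Module.finrank ℝ (LinearMap.range D.mulVecLin) = d - 1 := by
  let L := (EuclideanSpace.equiv (Fin d) ℝ).toContinuousLinearMap ∘L φ.toContinuousLinearMap
  have hDL : D = secondMomentMatrix volume L (g ∘ φ) := Matrix.ext hD
  have hentries (m l : Fin d) : Integrable (fun u => L u m * L u l * (g ∘ φ) u) :=
    EuclideanSpace.integrable_apply_mul_apply_mul (fun _ => hg0 _) hint (by fun_prop)
  have hker : LinearMap.ker D.mulVecLin = ℝ ∙ (EuclideanSpace.equiv (Fin d) ℝ e) := by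
    ext ξ
    rw [LinearMap.mem_ker, mulVecLin_apply, hDL, secondMomentMatrix_mulVec_eq_zero_iff L
      (hg.comp φ.continuous) (fun _ => hg0 _) (by simpa using hgpos) hentries]
    exact EuclideanSpace.forall_dotProduct_eq_zero_iff_mem_span hφ ξ
  have he0 : EuclideanSpace.equiv (Fin d) ℝ e ≠ 0 :=
    (EuclideanSpace.equiv (Fin d) ℝ).map_ne_zero_iff.mpr (norm_ne_zero_iff.mp (by simp [he]))
  refine ⟨hker, ?_⟩
  rw [LinearMap.finrank_range_of_ker_eq_span_singleton he0 hker, Module.finrank_fin_fun]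

/-- Rank of the momentum diffusion matrix: if `g` is continuous, nonnegative, `g(0) > 0`
and `∫_H (1+|p|²) g < ∞` on the hyperplane `H = e^⊥` (realized through a linear isometry
`φ` from `ℝ^{d−1}` onto `H`), then the symmetric matrix `D_{ml} = ∫_H p_m p_l g(p) dσ(p)`
has kernel exactly `ℝ·e`, i.e. rank `d − 1`. -/
theorem diffusion_matrix_rank
    (d : ℕ) (hd : 3 ≤ d)
    (e : EuclideanSpace ℝ (Fin d)) (he : ‖e‖ = 1)
    (φ : EuclideanSpace ℝ (Fin (d - 1)) →ₗᵢ[ℝ] EuclideanSpace ℝ (Fin d))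
    (hφ : Set.range ⇑φ = {p : EuclideanSpace ℝ (Fin d) | ⟪p, e⟫ = 0})
    (g : EuclideanSpace ℝ (Fin d) → ℝ)
    (hg : Continuous g) (hg0 : ∀ p, 0 ≤ g p) (hgpos : 0 < g 0)
    (hint : Integrable
      (fun u : EuclideanSpace ℝ (Fin (d - 1)) => (1 + ‖φ u‖ ^ 2) * g (φ u)))
    (D : Matrix (Fin d) (Fin d) ℝ)
    (hD : ∀ m l, D m l = ∫ u : EuclideanSpace ℝ (Fin (d - 1)), φ u m * φ u l * g (φ u)) :
    LinearMap.ker D.mulVecLin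
        = Submodule.span ℝ {(EuclideanSpace.equiv (Fin d) ℝ) e} ∧
    Module.finrank ℝ (LinearMap.range D.mulVecLin) = d - 1 :=
  diffusion_matrix_rank_general d e he φ hφ g hg hg0 hgpos hint D hD
end
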